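/- Let (R,V) be an irreducible generalized root system with base S. Then there exists a unique root θ ∈ R such that β ≺_S θ for every β ∈ R; moreover, writing θ = Σ_{α∈S} k_α α, one has k_α > 0 for every α ∈ S. -/

import Mathlib

open scoped RealInnerProductSpace

variable {V : Type*} [NormedAddCommGroup V] [InnerProductSpace ℝ V] [FiniteDimensional ℝ V]

/-- A generalized root system: `R` is a nonempty finite spanning set such that for
`α, β ∈ R`: `⟪α,β⟫ < 0` implies `α+β ∈ R`; `⟪α,β⟫ > 0` implies `α-β ∈ R`; and
`⟪α,β⟫ = 0` implies `α+β ∈ R ↔ α-β ∈ R`. -/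
def IsGRS (R : Set V) : Prop :=
  R.Nonempty ∧ R.Finite ∧ Submodule.span ℝ R = ⊤ ∧
    ∀ α ∈ R, ∀ β ∈ R,
      (⟪α, β⟫ < 0 → α + β ∈ R) ∧
      (0 < ⟪α, β⟫ → α - β ∈ R) ∧
      (⟪α, β⟫ = 0 → (α + β ∈ R ↔ α - β ∈ R))

/-- `v` is a linear combination of elements of `S` with nonnegative integer coefficients. -/
def IsNonnegIntComb (S : Set V) (v : V) : Prop :=
  ∃ c : V →₀ ℤ, ↑c.support ⊆ S ∧ (∀ α, 0 ≤ c α) ∧ v = c.sum fun α n => (n : ℝ) • α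

/-- A base of a GRS `R`: a subset of `R` which is a vector-space basis of `V` such that
every root is a linear combination of `S` with coefficients all nonnegative integers or
all nonpositive integers. -/
def IsBase (R S : Set V) : Prop :=
  S ⊆ R ∧ LinearIndependent ℝ ((↑) : S → V) ∧ Submodule.span ℝ S = ⊤ ∧
    ∀ β ∈ R, IsNonnegIntComb S β ∨ IsNonnegIntComb S (-β)

/-- `R⁺(S)`: the roots whose coefficients in `S` are all nonnegative integers. -/
def posRoots (R S : Set V) : Set V := {β ∈ R | IsNonnegIntComb S β}

/-- The partial order `≺_S`: `x ≺_S y` iff `y - x` is a nonnegative integer combination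
of `S`. -/
def prec (S : Set V) (x y : V) : Prop := IsNonnegIntComb S (y - x)

/-- `β` is indecomposable in `P`: `β ∈ P` and `β` is not the sum of two nonzero
elements of `P`. -/
def IsIndecomposableIn (P : Set V) (β : V) : Prop :=
  β ∈ P ∧ ¬∃ γ ∈ P, ∃ δ ∈ P, γ ≠ 0 ∧ δ ≠ 0 ∧ β = γ + δ

/-- A positive system of `R`. -/
def IsPositiveSystem (R P : Set V) : Prop :=
  P ⊆ R ∧ (∀ α ∈ P, ∀ β ∈ P, α + β ∈ R → α + β ∈ P) ∧ R = P ∪ -P ∧ P ∩ -P = {0}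

/-- Irreducibility of a GRS. -/
def IsIrreducibleGRS (R : Set V) : Prop :=
  ∀ R₁ R₂ : Set V, R = R₁ ∪ R₂ → (∀ α ∈ R₁, ∀ β ∈ R₂, ⟪α, β⟫ = 0) →
    R₁ ⊆ {0} ∨ R₂ ⊆ {0}

/-- A primitive root of `R`. -/
def IsPrimitive (R : Set V) (α : V) : Prop :=
  α ∈ R ∧ α ≠ 0 ∧ ∀ (k : ℤ) (α' : V), 0 < k → α' ∈ R → α = (k : ℝ) • α' → k = 1

/-- The orthogonal projection `π_I` of `V` onto the orthogonal complement of the span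
of `I`. -/
noncomputable def projAway (I : Set V) : V → ↥((Submodule.span ℝ I)ᗮ) :=
  fun v => Submodule.orthogonalProjectionOnto ((Submodule.span ℝ I)ᗮ) v

/-- A root system. -/
def IsRootSystem (Δ : Set V) : Prop :=
  Δ.Finite ∧ (0 : V) ∉ Δ ∧ Submodule.span ℝ Δ = ⊤ ∧
    ∀ α ∈ Δ, ∀ β ∈ Δ,
      (β - (2 * ⟪β, α⟫ / ⟪α, α⟫) • α ∈ Δ) ∧
      (∃ n : ℤ, 2 * ⟪β, α⟫ / ⟪α, α⟫ = (n : ℝ)) ∧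
      ∀ t : ℝ, t • α ∈ Δ → t = 1 ∨ t = -1

/-!
Coordinates are taken in the basis `S`. Two sign arguments drive the proof. A `≺_S`-maximal
root `θ` has `⟪θ, α⟫ ≥ 0` for every `α ∈ S`, since otherwise `θ + α` would be a root; and
distinct `α, β ∈ S` have `⟪α, β⟫ ≤ 0`, since otherwise `α - β` would be a root with
coefficients of both signs. If some coefficient of `θ` vanished, these two facts would make the
simple roots with zero coefficient orthogonal to the others; but for any splitting of `S` into
two orthogonal parts, every root is supported on one part (a minimal counterexample `v` has an
`α` with `⟪α, v⟫ > 0`, and then `α - (v - α)` would be a root with coefficients of both signs),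
contradicting irreducibility. So all coefficients of `θ` are positive. Then `⟪θ, μ⟫ > 0` for
every nonzero maximal root `μ`, so `θ - μ` is a root, and maximality forces `μ ≺_S θ`. Every
root lies below a maximal one, hence below `θ`.
-/

section

omit [FiniteDimensional ℝ V]

variable {ι : Type*}

namespace IsGRS

variable {R : Set V} (hR : IsGRS R) {α β : V}
include hR

theorem add_mem_of_inner_neg (hα : α ∈ R) (hβ : β ∈ R) (h : ⟪α, β⟫ < 0) : α + β ∈ R :=
  (hR.2.2.2 α hα β hβ).1 h

theorem sub_mem_of_inner_pos (hα : α ∈ R) (hβ : β ∈ R) (h : 0 < ⟪α, β⟫) : α - β ∈ R :=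
  (hR.2.2.2 α hα β hβ).2.1 h

theorem sub_mem_of_add_mem (hα : α ∈ R) (hβ : β ∈ R) (h : ⟪α, β⟫ = 0) (hadd : α + β ∈ R) :
    α - β ∈ R :=
  ((hR.2.2.2 α hα β hβ).2.2 h).1 hadd

theorem zero_mem : (0 : V) ∈ R := by
  obtain ⟨α, hα⟩ := hR.1
  rcases eq_or_ne α 0 with rfl | hα0
  · exact hα
  · simpa using hR.sub_mem_of_inner_pos hα hα (real_inner_self_pos.2 hα0)

theorem neg_mem (hα : α ∈ R) : -α ∈ R := by
  simpa using hR.sub_mem_of_add_mem hR.zero_mem hα (inner_zero_left α) (by simpa using hα)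

end IsGRS

theorem Module.Basis.inner_eq_sum_repr (b : Module.Basis ι ℝ V) (v w : V) :
    ⟪v, w⟫ = (b.repr v).sum fun i a => a * ⟪b i, w⟫ := by
  conv_lhs => rw [← b.linearCombination_repr v, Finsupp.linearCombination_apply]
  rw [Finsupp.sum_inner]
  simp only [real_inner_smul_left]

theorem Module.Basis.inner_eq_zero_of_repr (b : Module.Basis ι ℝ V) {v w : V}
    (h : ∀ i j, b.repr v i ≠ 0 → b.repr w j ≠ 0 → ⟪b i, b j⟫ = 0) : ⟪v, w⟫ = 0 := by
  rw [b.inner_eq_sum_repr]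
  refine Finset.sum_eq_zero fun i hi => mul_eq_zero_of_right _ ?_
  rw [real_inner_comm, b.inner_eq_sum_repr]
  refine Finset.sum_eq_zero fun j hj => mul_eq_zero_of_right _ ?_
  rw [real_inner_comm]
  exact h i j (Finsupp.mem_support_iff.1 hi) (Finsupp.mem_support_iff.1 hj)

theorem Module.Basis.exists_repr_pos_inner_pos (b : Module.Basis ι ℝ V) {v : V} (hv : v ≠ 0)
    (hnn : ∀ i, 0 ≤ b.repr v i) : ∃ i, 0 < b.repr v i ∧ 0 < ⟪b i, v⟫ := by
  by_contra! h
  have : ⟪v, v⟫ ≤ 0 := by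
    rw [b.inner_eq_sum_repr]
    refine Finsupp.sum_nonpos fun i _ => ?_
    rcases (hnn i).lt_or_eq with hi | hi
    · exact mul_nonpos_of_nonneg_of_nonpos hi.le (h i hi)
    · simp [← hi]
  exact (real_inner_self_pos.2 hv).not_ge this

theorem Module.Basis.inner_pos_of_repr_pos (b : Module.Basis ι ℝ V) {θ μ : V}
    (hθ : ∀ i, 0 < b.repr θ i) (hμ : μ ≠ 0) (hdom : ∀ i, 0 ≤ ⟪b i, μ⟫) : 0 < ⟪θ, μ⟫ := by
  have hterms : ∀ i ∈ (b.repr θ).support, 0 ≤ b.repr θ i * ⟪b i, μ⟫ :=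
    fun i _ => mul_nonneg (hθ i).le (hdom i)
  rw [b.inner_eq_sum_repr]
  refine (Finsupp.sum_nonneg hterms).lt_of_ne' fun h0 => hμ ?_
  have hperp : ∀ i, ⟪b i, μ⟫ = 0 := fun i =>
    ((mul_eq_zero.1 <| (Finset.sum_eq_zero_iff_of_nonneg hterms).1 h0 i
      (Finsupp.mem_support_iff.2 (hθ i).ne')).resolve_left (hθ i).ne')
  rw [← inner_self_eq_zero (𝕜 := ℝ), b.inner_eq_sum_repr]
  simp [hperp]

def IsSignedBasis (R : Set V) (b : Module.Basis ι ℝ V) : Prop :=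
  (∀ i, b i ∈ R) ∧ ∀ v ∈ R, (∀ i, 0 ≤ b.repr v i) ∨ ∀ i, b.repr v i ≤ 0

namespace IsSignedBasis

variable {R : Set V} {b : Module.Basis ι ℝ V} (hb : IsSignedBasis R b)
include hb

theorem repr_nonneg_of_pos {v : V} (hv : v ∈ R) {i : ι} (hi : 0 < b.repr v i) (j : ι) :
    0 ≤ b.repr v j :=
  (hb.2 v hv).resolve_right (fun h => (h i).not_gt hi) j

theorem inner_nonpos (hR : IsGRS R) {i j : ι} (hij : i ≠ j) : ⟪b i, b j⟫ ≤ 0 := by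
  by_contra! h
  have hmem := hR.sub_mem_of_inner_pos (hb.1 i) (hb.1 j) h
  have := hb.repr_nonneg_of_pos hmem (i := i) (by simp [hij]) j
  norm_num [hij] at this

theorem repr_support_monochromatic_of_nonneg (hR : IsGRS R) {κ : Type*} (f : ι → κ)
    (hf : ∀ i j, f i ≠ f j → ⟪b i, b j⟫ = 0) {v : V} (hv : v ∈ R)
    (hnn : ∀ i, 0 ≤ b.repr v i) {i j : ι} (hi : b.repr v i ≠ 0) (hj : b.repr v j ≠ 0) :
    f i = f j := by
  by_contra hij
  -- a counterexample that is minimal for the coordinatewise order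
  obtain ⟨v, ⟨hvR, hnn, i, j, hi, hj, hij⟩, hmin⟩ :=
    Set.Finite.exists_minimalFor (fun v => ⇑(b.repr v))
      {v | v ∈ R ∧ (∀ i, 0 ≤ b.repr v i) ∧ ∃ i j, b.repr v i ≠ 0 ∧ b.repr v j ≠ 0 ∧ f i ≠ f j}
      (hR.2.1.subset fun v hv => hv.1) ⟨v, hv, hnn, i, j, hi, hj, hij⟩
  obtain ⟨α, hvα, hαv⟩ := b.exists_repr_pos_inner_pos (v := v) (fun h => hi (by simp [h])) hnn
  obtain ⟨β, hβ, hβα⟩ : ∃ β, b.repr v β ≠ 0 ∧ f β ≠ f α := by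
    by_cases h : f i = f α
    · exact ⟨j, hj, fun h' => hij (h.trans h'.symm)⟩
    · exact ⟨i, hi, h⟩
  have hαβ : α ≠ β := fun h => hβα (h ▸ rfl)
  set w := v - b α
  have hwR : w ∈ R := hR.sub_mem_of_inner_pos hvR (hb.1 α) (real_inner_comm v (b α) ▸ hαv)
  have hwα : b.repr w α = b.repr v α - 1 := by simp [w]
  have hwβ : b.repr w β = b.repr v β := by simp [w, hαβ]
  have hwnn := hb.repr_nonneg_of_pos hwR (hwβ ▸ (hnn β).lt_of_ne' hβ)
  have hwmono : ∀ k, b.repr w k ≠ 0 → f k = f β := by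
    by_contra! h
    obtain ⟨k, hk, hkβ⟩ := h
    have := hmin ⟨hwR, hwnn, k, β, hk, hwβ ▸ hβ, hkβ⟩ fun l => by
      simp only [w, map_sub, Finsupp.coe_sub, Pi.sub_apply, b.repr_self]
      exact sub_le_self _ (Finsupp.single_nonneg.2 zero_le_one l)
    linarith [this α]
  have hwα0 : b.repr w α = 0 := by_contra fun h => hβα (hwmono α h).symm
  have horth : ⟪b α, w⟫ = 0 := b.inner_eq_zero_of_repr fun k l hk hl => hf k l (by
    rw [b.repr_self, Finsupp.single_apply_ne_zero] at hk
    rw [hk.1, hwmono l hl]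
    exact hβα.symm)
  have hdiff := hR.sub_mem_of_add_mem (hb.1 α) hwR horth (by simpa [w] using hvR)
  have := hb.repr_nonneg_of_pos hdiff (i := α) (by simp [hwα0]) β
  simp [hαβ] at this
  linarith [(hnn β).lt_of_ne' hβ]

theorem repr_support_monochromatic (hR : IsGRS R) {κ : Type*} (f : ι → κ)
    (hf : ∀ i j, f i ≠ f j → ⟪b i, b j⟫ = 0) {v : V} (hv : v ∈ R) {i j : ι}
    (hi : b.repr v i ≠ 0) (hj : b.repr v j ≠ 0) : f i = f j := by
  rcases hb.2 v hv with hnn | hnp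
  · exact hb.repr_support_monochromatic_of_nonneg hR f hf hv hnn hi hj
  · exact hb.repr_support_monochromatic_of_nonneg hR f hf (hR.neg_mem hv)
      (fun k => by simpa using hnp k) (by simpa using hi) (by simpa using hj)

theorem repr_pos_of_inner_nonneg (hR : IsGRS R) (hirr : IsIrreducibleGRS R) {θ : V}
    (hθR : θ ∈ R) (hθ0 : θ ≠ 0) (hnn : ∀ i, 0 ≤ b.repr θ i) (hdom : ∀ i, 0 ≤ ⟪θ, b i⟫)
    (i : ι) : 0 < b.repr θ i := by
  have horth : ∀ i j, b.repr θ i ≠ 0 → b.repr θ j = 0 → ⟪b i, b j⟫ = 0 := by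
    intro i j hi hj
    have hterms : ∀ k ∈ (b.repr θ).support, b.repr θ k * ⟪b k, b j⟫ ≤ 0 := fun k hk =>
      mul_nonpos_of_nonneg_of_nonpos (hnn k)
        (hb.inner_nonpos hR fun h => Finsupp.mem_support_iff.1 hk (h ▸ hj))
    have hsum : (b.repr θ).sum (fun k a => a * ⟪b k, b j⟫) = 0 :=
      le_antisymm (Finsupp.sum_nonpos hterms) (b.inner_eq_sum_repr θ (b j) ▸ hdom j)
    exact (mul_eq_zero.1 ((Finset.sum_eq_zero_iff_of_nonpos hterms).1 hsum i
      (Finsupp.mem_support_iff.2 hi))).resolve_left hi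
  have hsplit : ∀ k l, (b.repr θ k = 0) ≠ (b.repr θ l = 0) → ⟪b k, b l⟫ = 0 := by
    intro k l hkl
    by_cases hk : b.repr θ k = 0
    · rw [real_inner_comm]
      exact horth l k (by simpa [hk] using hkl) hk
    · exact horth k l hk (by simpa [hk] using hkl)
  by_contra! hi
  have hi0 : b.repr θ i = 0 := le_antisymm hi (hnn i)
  set R₁ := {v ∈ R | ∀ k, b.repr v k ≠ 0 → b.repr θ k ≠ 0}
  set R₂ := {v ∈ R | ∀ k, b.repr v k ≠ 0 → b.repr θ k = 0}
  have hcover : R = R₁ ∪ R₂ := by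
    ext v
    refine ⟨fun hv => ?_, fun hv => hv.elim And.left And.left⟩
    by_cases h : ∃ k, b.repr v k ≠ 0 ∧ b.repr θ k ≠ 0
    · obtain ⟨k, hvk, hθk⟩ := h
      exact Or.inl ⟨hv, fun l hl hθl =>
        hθk <| Eq.mp (hb.repr_support_monochromatic hR _ hsplit hv hl hvk) hθl⟩
    · exact Or.inr ⟨hv, fun k hk => not_not.1 fun hθk => h ⟨k, hk, hθk⟩⟩
  have hR₁R₂ : ∀ v ∈ R₁, ∀ w ∈ R₂, ⟪v, w⟫ = 0 := fun v hv w hw =>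
    b.inner_eq_zero_of_repr fun k l hk hl => horth k l (hv.2 k hk) (hw.2 l hl)
  rcases hirr R₁ R₂ hcover hR₁R₂ with h | h
  · exact hθ0 (h ⟨hθR, fun k hk => hk⟩)
  · refine b.ne_zero i (h ⟨hb.1 i, fun k hk => ?_⟩)
    rw [b.repr_self, Finsupp.single_apply_ne_zero] at hk
    rwa [hk.1]

end IsSignedBasis

theorem IsNonnegIntComb.zero {S : Set V} : IsNonnegIntComb S 0 :=
  ⟨0, by simp, fun _ => le_rfl, by simp⟩

theorem IsNonnegIntComb.of_mem {S : Set V} {α : V} (hα : α ∈ S) : IsNonnegIntComb S α := by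
  classical
  refine ⟨Finsupp.single α 1, ?_, fun β => Finsupp.single_nonneg.2 zero_le_one β, by simp⟩
  rw [Finsupp.support_single _ one_ne_zero]
  simpa using hα

theorem IsNonnegIntComb.add {S : Set V} {u v : V} (hu : IsNonnegIntComb S u)
    (hv : IsNonnegIntComb S v) : IsNonnegIntComb S (u + v) := by
  classical
  obtain ⟨c, hc, hc0, rfl⟩ := hu
  obtain ⟨d, hd, hd0, rfl⟩ := hv
  refine ⟨c + d, (Finset.coe_subset.2 Finsupp.support_add).trans ?_,
    fun α => add_nonneg (hc0 α) (hd0 α), ?_⟩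
  · rw [Finset.coe_union]
    exact Set.union_subset hc hd
  · rw [Finsupp.sum_add_index' (by simp) fun _ _ _ => by push_cast; exact add_smul _ _ _]

theorem prec_refl (S : Set V) (x : V) : prec S x x := by
  rw [prec, sub_self]
  exact .zero

theorem prec_trans {S : Set V} {x y z : V} (hxy : prec S x y) (hyz : prec S y z) : prec S x z := by
  simpa [prec] using hyz.add hxy

namespace IsBase

variable {R S : Set V} (hS : IsBase R S)
include hS

noncomputable def basis : Module.Basis S ℝ V :=
  .mk hS.2.1 (by rw [Subtype.range_coe, hS.2.2.1])

@[simp]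
theorem basis_apply (i : S) : hS.basis i = i :=
  Module.Basis.mk_apply _ _ _

theorem repr_finsuppSum {c : V →₀ ℤ} (hc : ↑c.support ⊆ S) (i : S) :
    hS.basis.repr (c.sum fun α n => (n : ℝ) • α) i = c i := by
  classical
  have hterm : ∀ α ∈ c.support,
      hS.basis.repr ((c α : ℝ) • α) i = if α = i then (c α : ℝ) else 0 := by
    intro α hα
    have hrepr : hS.basis.repr α = Finsupp.single ⟨α, hc hα⟩ 1 := by
      simpa using hS.basis.repr_self ⟨α, hc hα⟩
    simp [hrepr, Finsupp.single_apply, Subtype.ext_iff]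
  rw [map_finsuppSum, Finsupp.sum_apply, Finsupp.sum, Finset.sum_congr rfl hterm,
    Finset.sum_ite_eq']
  split_ifs with h
  · rfl
  · simp [Finsupp.notMem_support_iff.1 h]

theorem repr_nonneg {v : V} (hv : IsNonnegIntComb S v) (i : S) : 0 ≤ hS.basis.repr v i := by
  obtain ⟨c, hc, hc0, rfl⟩ := hv
  rw [hS.repr_finsuppSum hc]
  exact_mod_cast hc0 i

theorem isSignedBasis : IsSignedBasis R hS.basis :=
  ⟨fun i => by simpa using hS.1 i.2, fun v hv =>
    (hS.2.2.2 v hv).imp hS.repr_nonneg fun h i => by simpa using hS.repr_nonneg h i⟩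

theorem repr_le_of_prec {x y : V} (h : prec S x y) :
    ⇑(hS.basis.repr x) ≤ ⇑(hS.basis.repr y) :=
  fun i => by simpa using hS.repr_nonneg h i

theorem eq_of_prec_of_repr_le {x y : V} (h : prec S x y)
    (h' : ⇑(hS.basis.repr y) ≤ ⇑(hS.basis.repr x)) : x = y :=
  hS.basis.repr.injective <| Finsupp.ext fun i => le_antisymm (hS.repr_le_of_prec h i) (h' i)

theorem prec_antisymm {x y : V} (hxy : prec S x y) (hyx : prec S y x) : x = y :=
  hS.eq_of_prec_of_repr_le hxy (hS.repr_le_of_prec hyx)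

theorem exists_maximal (hR : R.Finite) {β : V} (hβ : β ∈ R) :
    ∃ θ ∈ R, prec S β θ ∧ ∀ γ ∈ R, prec S θ γ → γ = θ := by
  obtain ⟨θ, ⟨hθR, hβθ⟩, hmax⟩ := Set.Finite.exists_maximalFor (fun v => ⇑(hS.basis.repr v))
    {γ ∈ R | prec S β γ} (hR.subset fun _ h => h.1) ⟨β, hβ, prec_refl S β⟩
  refine ⟨θ, hθR, hβθ, fun γ hγ hθγ => ?_⟩
  exact (hS.eq_of_prec_of_repr_le hθγ (hmax ⟨hγ, prec_trans hβθ hθγ⟩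
    (hS.repr_le_of_prec hθγ))).symm

theorem inner_nonneg_of_maximal (hR : IsGRS R) {θ : V} (hθR : θ ∈ R)
    (hmax : ∀ γ ∈ R, prec S θ γ → γ = θ) (i : S) : 0 ≤ ⟪θ, hS.basis i⟫ := by
  by_contra! h
  have hsum := hmax _ (hR.add_mem_of_inner_neg hθR (hS.1 i.2) (by simpa using h))
    (by simpa [prec] using IsNonnegIntComb.of_mem i.2)
  exact hS.basis.ne_zero i (by simpa using hsum)

theorem prec_of_maximal (hR : IsGRS R) {θ : V} (hθR : θ ∈ R) (h0θ : prec S 0 θ)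
    (hθpos : ∀ i, 0 < hS.basis.repr θ i) (hθmax : ∀ γ ∈ R, prec S θ γ → γ = θ) {β : V}
    (hβ : β ∈ R) : prec S β θ := by
  obtain ⟨μ, hμR, hβμ, hμmax⟩ := hS.exists_maximal hR.2.1 hβ
  rcases eq_or_ne μ 0 with rfl | hμ0
  · exact prec_trans hβμ h0θ
  have hθμ : 0 < ⟪θ, μ⟫ := hS.basis.inner_pos_of_repr_pos hθpos hμ0 fun i =>
    real_inner_comm μ (hS.basis i) ▸ hS.inner_nonneg_of_maximal hR hμR hμmax i
  rcases hS.2.2.2 _ (hR.sub_mem_of_inner_pos hθR hμR hθμ) with h | h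
  · exact prec_trans hβμ h
  · rw [← hθmax μ hμR (by rwa [prec, ← neg_sub])]
    exact hβμ

end IsBase

end

/-- An irreducible GRS has a unique highest root `θ` with respect to any
base `S`, and all coefficients of `θ` in `S` are positive. -/
theorem stmt5 (R S : Set V) (hR : IsGRS R) (hirr : IsIrreducibleGRS R)
    (hS : IsBase R S) :
    (∃! θ, θ ∈ R ∧ ∀ β ∈ R, prec S β θ) ∧
      ∀ θ, θ ∈ R → (∀ β ∈ R, prec S β θ) →
        ∃ c : V →₀ ℤ, ↑c.support ⊆ S ∧ (∀ α ∈ S, 0 < c α) ∧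
          θ = c.sum fun α n => (n : ℝ) • α := by
  obtain ⟨θ, hθR, h0θ, hθmax⟩ := hS.exists_maximal hR.2.1 hR.zero_mem
  have hθnn : IsNonnegIntComb S θ := by simpa [prec] using h0θ
  have hθpos : ∀ i, 0 < hS.basis.repr θ i := by
    rcases eq_or_ne θ 0 with rfl | hθ0
    · -- `0` is maximal only when `S` is empty
      intro i
      refine absurd (hθmax i (hS.1 i.2) ?_) (by simpa using hS.basis.ne_zero i)
      simpa [prec] using IsNonnegIntComb.of_mem i.2
    · exact hS.isSignedBasis.repr_pos_of_inner_nonneg hR hirr hθR hθ0 (hS.repr_nonneg hθnn)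
        (hS.inner_nonneg_of_maximal hR hθR hθmax)
  have hθtop : ∀ β ∈ R, prec S β θ := fun β hβ => hS.prec_of_maximal hR hθR h0θ hθpos hθmax hβ
  refine ⟨⟨θ, ⟨hθR, hθtop⟩, fun θ' h => hS.prec_antisymm (hθtop θ' h.1) (h.2 θ hθR)⟩,
    fun θ' hθ'R hθ'top => ?_⟩
  obtain rfl := hS.prec_antisymm (hθ'top θ hθR) (hθtop θ' hθ'R)
  obtain ⟨c, hc, -, rfl⟩ := hθnn
  refine ⟨c, hc, fun α hα => ?_, rfl⟩
  exact_mod_cast hS.repr_finsuppSum hc ⟨α, hα⟩ ▸ hθpos ⟨α, hα⟩
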